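/- arXiv:2206.04589 — 6 statements merged into one kernel-verified Lean document; each statement's English description precedes it below -/
import Mathlib

section
/- Let k, m, M be positive integers with k ≤ m ≤ M, let ν > 0, and let A be a probability distribution on {0,1,...,m} such that |E_{X∼A}[K_t(X;m)]| ≤ ν for all 1 ≤ t ≤ k. Then for all subsets S, S' ⊆ {1,...,M} with |S| = |S'| = m, one has |χ_{U_M}(P_S^A, P_{S'}^A)| ≤ (|S∩S'|/m)^{k+1} · χ²(A, Bin(m,1/2)) + k·ν². -/
open Finset

/-- The pmf of the binomial distribution `Bin(m, p)` at `x`. -/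
noncomputable def binPMF (m : ℕ) (p : ℝ) (x : ℕ) : ℝ :=
  (m.choose x : ℝ) * p ^ x * (1 - p) ^ (m - x)

/-- The Kravchuk polynomial value `K_t(x; m)`. -/
noncomputable def kravchuk (m t x : ℕ) : ℝ :=
  ∑ j ∈ Finset.range (t + 1),
    (-1 : ℝ) ^ j * (x.choose j : ℝ) * ((m - x).choose (t - j) : ℝ)

/-- `Σ_{i ∈ S} x_i` for `x ∈ {0,1}^M`. -/
def bitSum {M : ℕ} (S : Finset (Fin M)) (x : Fin M → Bool) : ℕ :=
  (S.filter fun i => x i = true).card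

/-- The hidden junta distribution `P_S^A` on `{0,1}^M`. -/
noncomputable def juntaPMF (M m : ℕ) (A : ℕ → ℝ) (S : Finset (Fin M))
    (x : Fin M → Bool) : ℝ :=
  (2 : ℝ) ^ m / (2 : ℝ) ^ M * A (bitSum S x) / (m.choose (bitSum S x) : ℝ)

/-- The uniform distribution `U_M` on `{0,1}^M`. -/
noncomputable def uniformPMF (M : ℕ) (_x : Fin M → Bool) : ℝ := 1 / (2 : ℝ) ^ M

/-- Pairwise correlation `χ_D(P, Q)`. -/
noncomputable def chiCorr {α : Type*} [Fintype α] (P Q D : α → ℝ) : ℝ :=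
  (∑ x, P x * Q x / D x) - 1

/-- Chi-squared divergence `χ²(P, Q)` for distributions on `{0,…,m}`. -/
noncomputable def chiSqNat (m : ℕ) (P Q : ℕ → ℝ) : ℝ :=
  (∑ x ∈ Finset.range (m + 1), (P x) ^ 2 / Q x) - 1

/-!
Identify `{0,1}^M` with the subsets of `Fin M` and expand in the Walsh characters
`χ_T(x) = (-1)^{Σ_{i∈T} x_i}`. By Parseval, `χ_{U_M}(P, Q) = Σ_{T ≠ ∅} P̂(T) Q̂(T)`. Flipping a
coordinate outside `S` shows that `P̂_S^A(T) = 0` unless `T ⊆ S`, and for `T ⊆ S` with `|T| = t` a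
double count of the signs `(-1)^{|T ∩ Y|}` over `t`- and `w`-subsets of `S` gives
`P̂_S^A(T) = E_A[K_t] / C(m, t)`. Hence
`χ_{U_M}(P_S^A, P_{S'}^A) = Σ_{t ≥ 1} C(|S ∩ S'|, t) (E_A[K_t] / C(m, t))²`, a sum of nonnegative
terms whose case `M = m`, `S = S' = [m]` is `χ²(A, Bin(m, 1/2))`. The terms with `t ≤ k` are at most
`ν²` each, and for `t > k` the bound `C(|S ∩ S'|, t) ≤ (|S ∩ S'| / m)^t C(m, t)` compares them with
the terms of `χ²(A, Bin(m, 1/2))`.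
-/

section Kravchuk

variable {α : Type*} [DecidableEq α]

theorem card_powersetCard_filter_card_inter_eq {s T : Finset α} (hT : T ⊆ s) {j w : ℕ}
    (hj : j ≤ w) :
    #{Y ∈ s.powersetCard w | #(T ∩ Y) = j} = (#T).choose j * (#s - #T).choose (w - j) := by
  rw [← card_powersetCard j T, ← card_sdiff_of_subset hT, ← card_powersetCard (w - j) (s \ T),
    ← card_product]
  refine card_nbij' (fun Y => (T ∩ Y, Y \ T)) (fun p => p.1 ∪ p.2) ?_ ?_ ?_ ?_
  · intro Y hY
    simp only [mem_coe, mem_filter, mem_powersetCard] at hY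
    obtain ⟨⟨hYs, hYw⟩, hTY⟩ := hY
    have hsplit := card_sdiff_add_card_inter Y T
    rw [inter_comm] at hsplit
    simp only [mem_coe, mem_product, mem_powersetCard]
    exact ⟨⟨inter_subset_left, hTY⟩, sdiff_subset_sdiff hYs le_rfl, by omega⟩
  · rintro ⟨J, Z⟩ hJZ
    simp only [mem_coe, mem_product, mem_powersetCard] at hJZ
    obtain ⟨⟨hJT, hJ⟩, hZs, hZ⟩ := hJZ
    have hZT : Disjoint Z T := disjoint_of_subset_left hZs sdiff_disjoint
    simp only [mem_coe, mem_filter, mem_powersetCard]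
    refine ⟨⟨union_subset (hJT.trans hT) (hZs.trans sdiff_subset), ?_⟩, ?_⟩
    · rw [card_union_of_disjoint (disjoint_of_subset_left hJT hZT.symm), hJ, hZ]
      omega
    · rw [inter_union_distrib_left, inter_eq_right.2 hJT,
        disjoint_iff_inter_eq_empty.1 hZT.symm, union_empty, hJ]
  · intro Y _
    simp only
    rw [union_comm, inter_comm, sdiff_union_inter]
  · rintro ⟨J, Z⟩ hJZ
    simp only [mem_coe, mem_product, mem_powersetCard] at hJZ
    obtain ⟨⟨hJT, -⟩, hZs, -⟩ := hJZ
    have hZT : Disjoint Z T := disjoint_of_subset_left hZs sdiff_disjoint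
    simp only [Prod.mk.injEq]
    constructor
    · rw [inter_union_distrib_left, inter_eq_right.2 hJT,
        disjoint_iff_inter_eq_empty.1 hZT.symm, union_empty]
    · rw [union_sdiff_distrib, sdiff_eq_empty_iff_subset.2 hJT, sdiff_eq_self_of_disjoint hZT,
        empty_union]

theorem sum_powersetCard_neg_one_pow_card_inter {s T : Finset α} (hT : T ⊆ s) (w : ℕ) :
    ∑ Y ∈ s.powersetCard w, (-1 : ℝ) ^ #(T ∩ Y) = kravchuk #s w #T := by
  have hmaps : ∀ Y ∈ s.powersetCard w, #(T ∩ Y) ∈ range (w + 1) := fun Y hY =>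
    mem_range_succ_iff.2 ((card_le_card inter_subset_right).trans (mem_powersetCard.1 hY).2.le)
  rw [← sum_fiberwise_of_maps_to hmaps, kravchuk]
  refine sum_congr rfl fun j hj => ?_
  rw [sum_congr rfl fun Y hY => by rw [(mem_filter.1 hY).2], sum_const,
    card_powersetCard_filter_card_inter_eq hT (mem_range_succ_iff.1 hj), nsmul_eq_mul]
  push_cast
  ring

theorem choose_mul_kravchuk_comm (m t w : ℕ) :
    (m.choose t : ℝ) * kravchuk m w t = m.choose w * kravchuk m t w := by
  have hcount : ∀ t w, ∑ T ∈ (univ : Finset (Fin m)).powersetCard t,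
      ∑ Y ∈ (univ : Finset (Fin m)).powersetCard w, (-1 : ℝ) ^ #(T ∩ Y) =
        m.choose t * kravchuk m w t := by
    intro t w
    have hinner : ∀ T ∈ (univ : Finset (Fin m)).powersetCard t,
        ∑ Y ∈ (univ : Finset (Fin m)).powersetCard w, (-1 : ℝ) ^ #(T ∩ Y) = kravchuk m w t :=
      fun T hT => by
        rw [sum_powersetCard_neg_one_pow_card_inter (subset_univ T), (mem_powersetCard.1 hT).2,
          card_univ, Fintype.card_fin]
    rw [sum_congr rfl hinner, sum_const, card_powersetCard, card_univ, Fintype.card_fin,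
      nsmul_eq_mul]
  rw [← hcount, ← hcount, sum_comm]
  simp_rw [inter_comm]

variable [Fintype α]

theorem sum_inter_eq_two_pow_card_compl_smul {β : Type*} [AddCommMonoid β] (s : Finset α)
    (h : Finset α → β) :
    ∑ X : Finset α, h (s ∩ X) = 2 ^ #sᶜ • ∑ Y ∈ s.powerset, h Y := by
  rw [← card_powerset sᶜ, ← sum_const,
    ← sum_product_right (s := s.powerset) (t := sᶜ.powerset) (f := fun p => h p.1)]
  refine sum_nbij' (fun X => (s ∩ X, sᶜ ∩ X)) (fun p => p.1 ∪ p.2) ?_ ?_ ?_ ?_ ?_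
  · intro X _
    simp [inter_subset_left]
  · intro _ _
    exact mem_univ _
  · intro X _
    simp only
    rw [← union_inter_distrib_right, union_compl, univ_inter]
  · rintro ⟨Y, Z⟩ hYZ
    simp only [mem_product, mem_powerset] at hYZ
    have hZ : Disjoint s Z := disjoint_of_subset_right hYZ.2 disjoint_compl_right
    have hY : Disjoint sᶜ Y := disjoint_of_subset_right hYZ.1 disjoint_compl_left
    simp only [inter_union_distrib_left, inter_eq_right.2 hYZ.1, inter_eq_right.2 hYZ.2,
      disjoint_iff_inter_eq_empty.1 hZ, disjoint_iff_inter_eq_empty.1 hY, union_empty,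
      empty_union]
  · intro X _
    rfl

theorem sum_mul_neg_one_pow_card_inter_eq_kravchuk {s T : Finset α} (hT : T ⊆ s)
    (g : ℕ → ℝ) :
    ∑ X : Finset α, g #(s ∩ X) * (-1 : ℝ) ^ #(T ∩ X) =
      2 ^ #sᶜ * ∑ w ∈ range (#s + 1), g w * kravchuk #s w #T := by
  have hsplit := sum_inter_eq_two_pow_card_compl_smul s fun Y => g #Y * (-1 : ℝ) ^ #(T ∩ Y)
  simp only [← inter_assoc, inter_eq_left.2 hT] at hsplit
  rw [hsplit, nsmul_eq_mul, sum_powerset]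
  push_cast
  congr 1
  refine sum_congr rfl fun w _ => ?_
  rw [← sum_powersetCard_neg_one_pow_card_inter hT, mul_sum]
  exact sum_congr rfl fun Y hY => by rw [(mem_powersetCard.1 hY).2]

end Kravchuk

section Walsh

variable {M : ℕ}

def trueSet (x : Fin M → Bool) : Finset (Fin M) := univ.filter fun i => x i = true

theorem trueSet_bijective : Function.Bijective (trueSet (M := M)) := by
  refine (Fintype.bijective_iff_injective_and_card _).2 ⟨fun x y hxy => funext fun i => ?_, by
    simp [Fintype.card_finset]⟩
  have hi := congrArg (i ∈ ·) hxy
  simp only [trueSet, mem_filter, mem_univ, true_and, eq_iff_iff] at hi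
  cases hx : x i <;> cases hy : y i <;> simp_all

theorem sum_comp_trueSet {β : Type*} [AddCommMonoid β] (F : Finset (Fin M) → β) :
    ∑ x, F (trueSet x) = ∑ X, F X :=
  trueSet_bijective.sum_comp F

theorem sum_card_trueSet {β : Type*} [AddCommMonoid β] (F : ℕ → β) :
    ∑ x : Fin M → Bool, F #(trueSet x) = ∑ w ∈ range (M + 1), M.choose w • F w := by
  rw [sum_comp_trueSet fun X => F #X, ← powerset_univ, sum_powerset_apply_card, card_univ,
    Fintype.card_fin]

theorem bitSum_eq_card_inter_trueSet (S : Finset (Fin M)) (x : Fin M → Bool) :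
    bitSum S x = #(S ∩ trueSet x) := by
  rw [bitSum, trueSet, ← filter_mem_eq_inter]
  simp

theorem bitSum_update_of_notMem {S : Finset (Fin M)} {i : Fin M} (hi : i ∉ S)
    (x : Fin M → Bool) (b : Bool) : bitSum S (Function.update x i b) = bitSum S x := by
  unfold bitSum
  congr 1
  refine filter_congr fun j hj => ?_
  rw [Function.update_of_ne (ne_of_mem_of_not_mem hj hi)]

noncomputable def walsh (T : Finset (Fin M)) (x : Fin M → Bool) : ℝ := (-1) ^ bitSum T x

theorem walsh_eq_prod (T : Finset (Fin M)) (x : Fin M → Bool) :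
    walsh T x = ∏ i ∈ T, if x i then -1 else 1 := by
  rw [walsh, bitSum, prod_ite, prod_const, prod_const, one_pow, mul_one]

theorem walsh_update_not {T : Finset (Fin M)} {i : Fin M} (hi : i ∈ T) (x : Fin M → Bool) :
    walsh T (Function.update x i !(x i)) = -walsh T x := by
  rw [walsh_eq_prod, walsh_eq_prod, ← mul_prod_erase T _ hi, ← mul_prod_erase T _ hi,
    prod_congr rfl fun j hj => by rw [Function.update_of_ne (ne_of_mem_erase hj)]]
  cases x i <;> simp

theorem sum_walsh_mul_walsh (x y : Fin M → Bool) :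
    ∑ T, walsh T x * walsh T y = if x = y then 2 ^ M else 0 := by
  have hprod : ∀ T, walsh T x * walsh T y = ∏ i ∈ T, if x i = y i then 1 else -1 := fun T => by
    rw [walsh_eq_prod, walsh_eq_prod, ← prod_mul_distrib]
    exact prod_congr rfl fun i _ => by cases x i <;> cases y i <;> norm_num
  rw [sum_congr rfl fun T _ => hprod T, ← powerset_univ, ← prod_one_add]
  split_ifs with hxy
  · norm_num [hxy]
  · obtain ⟨i, hi⟩ := Function.ne_iff.1 hxy
    exact prod_eq_zero (mem_univ i) (by simp [hi])

noncomputable def walshCoeff (P : (Fin M → Bool) → ℝ) (T : Finset (Fin M)) : ℝ :=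
  ∑ x, P x * walsh T x

theorem sum_walshCoeff_mul_walshCoeff (P Q : (Fin M → Bool) → ℝ) :
    ∑ T, walshCoeff P T * walshCoeff Q T = 2 ^ M * ∑ x, P x * Q x := by
  calc ∑ T, walshCoeff P T * walshCoeff Q T
      = ∑ x, ∑ y, P x * Q y * ∑ T, walsh T x * walsh T y := by
        simp_rw [walshCoeff, sum_mul_sum, mul_sum]
        rw [sum_comm]
        refine sum_congr rfl fun x _ => ?_
        rw [sum_comm]
        refine sum_congr rfl fun y _ => sum_congr rfl fun T _ => by ring
    _ = 2 ^ M * ∑ x, P x * Q x := by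
        simp [sum_walsh_mul_walsh, mul_sum, mul_comm]

theorem chiCorr_uniformPMF (P Q : (Fin M → Bool) → ℝ) :
    chiCorr P Q (uniformPMF M) = ∑ T, walshCoeff P T * walshCoeff Q T - 1 := by
  rw [chiCorr, sum_walshCoeff_mul_walshCoeff, mul_sum]
  congr 1
  refine sum_congr rfl fun x _ => ?_
  rw [uniformPMF]
  field_simp

theorem walshCoeff_eq_zero_of_update_not {P : (Fin M → Bool) → ℝ} {T : Finset (Fin M)}
    {i : Fin M} (hi : i ∈ T) (hP : ∀ x, P (Function.update x i !(x i)) = P x) :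
    walshCoeff P T = 0 :=
  sum_ninvolution (fun x => Function.update x i !(x i))
    (fun x => by rw [hP, walsh_update_not hi]; ring)
    (fun x _ h => by simpa using congrFun h i) (fun _ => mem_univ _) (fun x => by simp)

theorem sum_mul_walsh_eq_kravchuk {S T : Finset (Fin M)} (hT : T ⊆ S) (g : ℕ → ℝ) :
    ∑ x, g (bitSum S x) * walsh T x =
      2 ^ (M - #S) * ∑ w ∈ range (#S + 1), g w * kravchuk #S w #T := by
  simp only [walsh, bitSum_eq_card_inter_trueSet]
  rw [sum_comp_trueSet fun X => g #(S ∩ X) * (-1 : ℝ) ^ #(T ∩ X),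
    sum_mul_neg_one_pow_card_inter_eq_kravchuk hT, card_compl, Fintype.card_fin]

end Walsh

noncomputable def kravchukMoment (m : ℕ) (A : ℕ → ℝ) (t : ℕ) : ℝ :=
  ∑ x ∈ range (m + 1), A x * kravchuk m t x

section Junta

variable {M m : ℕ} {A : ℕ → ℝ}

theorem kravchukMoment_zero (hA1 : ∑ x ∈ range (m + 1), A x = 1) : kravchukMoment m A 0 = 1 := by
  simpa [kravchukMoment, kravchuk] using hA1

theorem walshCoeff_juntaPMF_of_not_subset {S T : Finset (Fin M)} (hT : ¬T ⊆ S) :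
    walshCoeff (juntaPMF M m A S) T = 0 := by
  obtain ⟨i, hiT, hiS⟩ := not_subset.1 hT
  exact walshCoeff_eq_zero_of_update_not hiT fun x => by
    simp only [juntaPMF, bitSum_update_of_notMem hiS]

theorem walshCoeff_juntaPMF_of_subset {S T : Finset (Fin M)} (hS : #S = m) (hT : T ⊆ S) :
    walshCoeff (juntaPMF M m A S) T = kravchukMoment m A #T / m.choose #T := by
  have hmM : m ≤ M := hS ▸ (card_le_univ S).trans_eq (Fintype.card_fin M)
  have htm : #T ≤ m := hS ▸ card_le_card hT
  have hscale : (2 : ℝ) ^ m / 2 ^ M * 2 ^ (M - m) = 1 := by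
    rw [div_mul_eq_mul_div, ← pow_add, Nat.add_sub_cancel' hmM, div_self (by positivity)]
  have hjunta : ∀ x, juntaPMF M m A S x * walsh T x =
      2 ^ m / 2 ^ M * (A (bitSum S x) / m.choose (bitSum S x) * walsh T x) := fun x => by
    rw [juntaPMF]
    ring
  rw [walshCoeff, sum_congr rfl fun x _ => hjunta x, ← mul_sum,
    sum_mul_walsh_eq_kravchuk hT fun w => A w / m.choose w, hS,
    ← mul_assoc, hscale, one_mul, kravchukMoment, sum_div]
  refine sum_congr rfl fun w hw => ?_
  have hwm : w ≤ m := mem_range_succ_iff.1 hw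
  have hw0 : (m.choose w : ℝ) ≠ 0 := by exact_mod_cast (Nat.choose_pos hwm).ne'
  have ht0 : (m.choose #T : ℝ) ≠ 0 := by exact_mod_cast (Nat.choose_pos htm).ne'
  field_simp
  linear_combination A w * choose_mul_kravchuk_comm m #T w

theorem walshCoeff_juntaPMF_mul {S S' : Finset (Fin M)} (hS : #S = m) (hS' : #S' = m)
    (T : Finset (Fin M)) :
    walshCoeff (juntaPMF M m A S) T * walshCoeff (juntaPMF M m A S') T =
      if T ⊆ S ∩ S' then (kravchukMoment m A #T / m.choose #T) ^ 2 else 0 := by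
  by_cases hTS : T ⊆ S
  · by_cases hTS' : T ⊆ S'
    · rw [if_pos (subset_inter hTS hTS'), walshCoeff_juntaPMF_of_subset hS hTS,
        walshCoeff_juntaPMF_of_subset hS' hTS', sq]
    · rw [if_neg fun h => hTS' (h.trans inter_subset_right),
        walshCoeff_juntaPMF_of_not_subset hTS', mul_zero]
  · rw [if_neg fun h => hTS (h.trans inter_subset_left), walshCoeff_juntaPMF_of_not_subset hTS,
      zero_mul]

theorem chiCorr_juntaPMF_uniformPMF (hA1 : ∑ x ∈ range (m + 1), A x = 1)
    {S S' : Finset (Fin M)} (hS : #S = m) (hS' : #S' = m) :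
    chiCorr (juntaPMF M m A S) (juntaPMF M m A S') (uniformPMF M) =
      ∑ t ∈ Icc 1 #(S ∩ S'), (#(S ∩ S')).choose t * (kravchukMoment m A t / m.choose t) ^ 2 := by
  rw [chiCorr_uniformPMF, sum_congr rfl fun T _ => walshCoeff_juntaPMF_mul hS hS' T,
    ← sum_filter, filter_subset_univ,
    sum_powerset_apply_card fun t => (kravchukMoment m A t / m.choose t) ^ 2, range_eq_Ico,
    sum_eq_sum_Ico_succ_bot (Nat.succ_pos _), zero_add, Nat.succ_eq_add_one,
    Ico_add_one_right_eq_Icc, kravchukMoment_zero hA1]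
  simp

end Junta

theorem chiSqNat_binPMF_half_eq_chiCorr (m : ℕ) (A : ℕ → ℝ) :
    chiSqNat m A (binPMF m (1 / 2)) =
      chiCorr (juntaPMF m m A univ) (juntaPMF m m A univ) (uniformPMF m) := by
  rw [chiSqNat, chiCorr]
  congr 1
  simp only [juntaPMF, uniformPMF, bitSum_eq_card_inter_trueSet, univ_inter,
    div_self (pow_ne_zero m (two_ne_zero' ℝ)), one_mul]
  rw [sum_card_trueSet fun w => A w / m.choose w * (A w / m.choose w) / (1 / 2 ^ m)]
  refine sum_congr rfl fun w hw => ?_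
  have hwm : w ≤ m := mem_range_succ_iff.1 hw
  have hw0 : (m.choose w : ℝ) ≠ 0 := by exact_mod_cast (Nat.choose_pos hwm).ne'
  have hhalf : (1 / 2 : ℝ) ^ w * (1 - 1 / 2) ^ (m - w) = 1 / 2 ^ m := by
    rw [show (1 : ℝ) - 1 / 2 = 1 / 2 by norm_num, ← pow_add, Nat.add_sub_cancel' hwm, one_div_pow]
  rw [binPMF, mul_assoc, hhalf, nsmul_eq_mul]
  field_simp

theorem Nat.pow_mul_choose_le_pow_mul_choose {s m : ℕ} (h : s ≤ m) (t : ℕ) :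
    m ^ t * s.choose t ≤ s ^ t * m.choose t := by
  have hpow : ∀ n : ℕ, n ^ t = ∏ _i ∈ range t, n := fun n => by rw [prod_const, card_range]
  have hdesc : m ^ t * s.descFactorial t ≤ s ^ t * m.descFactorial t := by
    rw [descFactorial_eq_prod_range, descFactorial_eq_prod_range, hpow m, hpow s,
      ← prod_mul_distrib, ← prod_mul_distrib]
    refine prod_le_prod (fun _ _ => Nat.zero_le _) fun i _ => ?_
    rcases le_total i s with his | hsi
    · zify [his, his.trans h]
      nlinarith
    · simp [Nat.sub_eq_zero_of_le hsi]
  rw [descFactorial_eq_factorial_mul_choose, descFactorial_eq_factorial_mul_choose] at hdesc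
  refine Nat.le_of_mul_le_mul_left ?_ t.factorial_pos
  linarith

theorem Nat.choose_le_div_pow_mul_choose {s m : ℕ} (h : s ≤ m) (t : ℕ) :
    (s.choose t : ℝ) ≤ ((s : ℝ) / m) ^ t * m.choose t := by
  rcases Nat.eq_zero_or_pos m with rfl | hm
  · obtain rfl := Nat.le_zero.1 h
    rcases t with _ | t <;> simp
  · rw [div_pow, div_mul_eq_mul_div, le_div_iff₀ (by positivity)]
    exact_mod_cast (mul_comm _ _).trans_le (Nat.pow_mul_choose_le_pow_mul_choose h t)

section Tail

variable {s m k : ℕ} (μ : ℕ → ℝ)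

theorem sum_choose_mul_sq_div_choose_le_of_le (hsm : s ≤ m) {ν : ℝ}
    (hμ : ∀ t, 1 ≤ t → t ≤ k → |μ t| ≤ ν) :
    ∑ t ∈ Icc 1 s with t ≤ k, (s.choose t : ℝ) * (μ t / m.choose t) ^ 2 ≤ k * ν ^ 2 := by
  have hterm : ∀ t ∈ {t ∈ Icc 1 s | t ≤ k}, (s.choose t : ℝ) * (μ t / m.choose t) ^ 2 ≤ ν ^ 2 := by
    intro t ht
    simp only [mem_filter, mem_Icc] at ht
    have hC : (0 : ℝ) < m.choose t := by exact_mod_cast Nat.choose_pos (ht.1.2.trans hsm)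
    have hsC : (s.choose t : ℝ) ≤ (m.choose t : ℝ) ^ 2 := by
      exact_mod_cast (Nat.choose_le_choose t hsm).trans (Nat.le_self_pow two_ne_zero _)
    calc (s.choose t : ℝ) * (μ t / m.choose t) ^ 2
        ≤ (m.choose t : ℝ) ^ 2 * (μ t / m.choose t) ^ 2 := by gcongr
      _ = |μ t| ^ 2 := by field_simp; rw [sq_abs]
      _ ≤ ν ^ 2 := pow_le_pow_left₀ (abs_nonneg _) (hμ t ht.1.1 ht.2) 2
  calc _ ≤ ∑ t ∈ Icc 1 s with t ≤ k, ν ^ 2 := sum_le_sum hterm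
    _ ≤ ∑ t ∈ Icc 1 k, ν ^ 2 :=
        sum_le_sum_of_subset_of_nonneg
          (fun t ht => by simp only [mem_filter, mem_Icc] at ht ⊢; omega) fun _ _ _ => sq_nonneg ν
    _ = k * ν ^ 2 := by simp

theorem sum_choose_mul_sq_div_choose_le_of_gt (hsm : s ≤ m) :
    ∑ t ∈ Icc 1 s with ¬t ≤ k, (s.choose t : ℝ) * (μ t / m.choose t) ^ 2 ≤
      ((s : ℝ) / m) ^ (k + 1) * ∑ t ∈ Icc 1 m, (m.choose t : ℝ) * (μ t / m.choose t) ^ 2 := by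
  have hr0 : 0 ≤ (s : ℝ) / m := by positivity
  have hr1 : (s : ℝ) / m ≤ 1 := div_le_one_of_le₀ (by exact_mod_cast hsm) (Nat.cast_nonneg m)
  rw [mul_sum]
  calc _ ≤ ∑ t ∈ Icc 1 s with ¬t ≤ k,
        ((s : ℝ) / m) ^ (k + 1) * ((m.choose t : ℝ) * (μ t / m.choose t) ^ 2) := by
        refine sum_le_sum fun t ht => ?_
        simp only [mem_filter, mem_Icc] at ht
        rw [← mul_assoc]
        gcongr
        calc (s.choose t : ℝ) ≤ ((s : ℝ) / m) ^ t * m.choose t :=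
              Nat.choose_le_div_pow_mul_choose hsm t
          _ ≤ ((s : ℝ) / m) ^ (k + 1) * m.choose t :=
              mul_le_mul_of_nonneg_right (pow_le_pow_of_le_one hr0 hr1 (by omega))
                (Nat.cast_nonneg _)
    _ ≤ _ :=
        sum_le_sum_of_subset_of_nonneg
          (fun t ht => by simp only [mem_filter, mem_Icc] at ht ⊢; omega) fun _ _ _ => by positivity

end Tail

theorem correlation_lemma_general (k m M : ℕ) (ν : ℝ) (A : ℕ → ℝ)
    (hA1 : ∑ x ∈ Finset.range (m + 1), A x = 1)
    (hmom : ∀ t, 1 ≤ t → t ≤ k →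
      |∑ x ∈ Finset.range (m + 1), A x * kravchuk m t x| ≤ ν)
    (S S' : Finset (Fin M)) (hS : S.card = m) (hS' : S'.card = m) :
    |chiCorr (juntaPMF M m A S) (juntaPMF M m A S') (uniformPMF M)| ≤
      (((S ∩ S').card : ℝ) / (m : ℝ)) ^ (k + 1) *
        chiSqNat m A (binPMF m (1 / 2)) + (k : ℝ) * ν ^ 2 := by
  have hsm : #(S ∩ S') ≤ m := hS ▸ card_le_card inter_subset_left
  have hcube : #(univ : Finset (Fin m)) = m := by rw [card_univ, Fintype.card_fin]
  rw [chiSqNat_binPMF_half_eq_chiCorr, chiCorr_juntaPMF_uniformPMF hA1 hcube hcube, univ_inter,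
    hcube, chiCorr_juntaPMF_uniformPMF hA1 hS hS',
    abs_of_nonneg (sum_nonneg fun t _ => by positivity), ← sum_filter_not_add_sum_filter _ (· ≤ k)]
  exact add_le_add (sum_choose_mul_sq_div_choose_le_of_gt _ hsm)
    (sum_choose_mul_sq_div_choose_le_of_le _ hsm hmom)

/-- Correlation Lemma: if `A` approximately matches the first `k` moments with
`Bin(m,1/2)` (in the Kravchuk sense), then the hidden junta distributions indexed by
`m`-element subsets `S, S'` of `[M]` are nearly orthogonal relative to `U_M`. -/
theorem correlation_lemma (k m M : ℕ) (hk : 0 < k) (hkm : k ≤ m) (hmM : m ≤ M)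
    (ν : ℝ) (hν : 0 < ν) (A : ℕ → ℝ)
    (hA0 : ∀ x, 0 ≤ A x) (hAsupp : ∀ x, m < x → A x = 0)
    (hA1 : ∑ x ∈ Finset.range (m + 1), A x = 1)
    (hmom : ∀ t, 1 ≤ t → t ≤ k →
      |∑ x ∈ Finset.range (m + 1), A x * kravchuk m t x| ≤ ν)
    (S S' : Finset (Fin M)) (hS : S.card = m) (hS' : S'.card = m) :
    |chiCorr (juntaPMF M m A S) (juntaPMF M m A S') (uniformPMF M)| ≤
      (((S ∩ S').card : ℝ) / (m : ℝ)) ^ (k + 1) *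
        chiSqNat m A (binPMF m (1 / 2)) + (k : ℝ) * ν ^ 2 :=
  correlation_lemma_general k m M ν A hA1 hmom S S' hS hS'
end

section
/- Let m < M be positive integers, let A be a probability distribution on {0,1,...,m}, and let S ⊆ {1,...,M} with |S| = m. Then χ²(P_S^A, U_M) = χ²(A, Bin(m,1/2)); equivalently, 2^M Σ_{x∈{0,1}^M} P_S^A(x)² = 2^m Σ_{j=0}^m A(j)²/binom(m,j). -/
open Finset

/-- Chi-squared divergence for distributions on `{0,1}^M`. -/
noncomputable def chiSqCube (M : ℕ) (P Q : (Fin M → Bool) → ℝ) : ℝ :=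
  (∑ x : Fin M → Bool, (P x) ^ 2 / Q x) - 1

/-!
`P_S^A(x)` depends on `x` only through its weight `j` on `S`, and exactly
`binom(m, j) · 2^(M - m)` points of the cube have weight `j` on `S`. Hence
`2^M Σ_x P_S^A(x)²` collapses to `2^m Σ_j A(j)² / binom(m, j)`, which is also
`Σ_j A(j)² / Bin(m, 1/2)(j)` because `Bin(m, 1/2)(j) = binom(m, j) / 2^m`.
-/

theorem Fintype.sum_bool_fun_card_true {ι β : Type*} [Fintype ι] [DecidableEq ι]
    [AddCommMonoid β] (f : ℕ → β) :
    ∑ x : ι → Bool, f #{i | x i = true} =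
      ∑ j ∈ range (Fintype.card ι + 1), (Fintype.card ι).choose j • f j := by
  let e : (ι → Bool) ≃ Finset ι :=
    { toFun := fun x => {i | x i = true}
      invFun := fun T i => decide (i ∈ T)
      left_inv := fun x => by funext i; simp
      right_inv := fun T => by ext i; simp }
  calc ∑ x : ι → Bool, f #{i | x i = true} = ∑ T : Finset ι, f #T :=
        Fintype.sum_equiv e _ _ fun _ => rfl
    _ = _ := by rw [← powerset_univ, sum_powerset_apply_card, card_univ]

theorem bitSum_eq_card_filter_subtype {M : ℕ} (S : Finset (Fin M)) (x : Fin M → Bool) :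
    bitSum S x = #{i : S | x i = true} := by
  rw [bitSum, univ_eq_attach, filter_attach (fun i => x i = true), card_map, card_attach]

theorem sum_bitSum {M : ℕ} {β : Type*} [AddCommMonoid β] (S : Finset (Fin M)) (f : ℕ → β) :
    ∑ x : Fin M → Bool, f (bitSum S x) =
      2 ^ (M - #S) • ∑ j ∈ range (#S + 1), (#S).choose j • f j := by
  calc ∑ x : Fin M → Bool, f (bitSum S x)
      = ∑ p : (S → Bool) × ({i // i ∉ S} → Bool), f #{i | p.1 i = true} :=
        Fintype.sum_equiv (Equiv.piEquivPiSubtypeProd (· ∈ S) fun _ => Bool) _ _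
          fun x => congrArg f (bitSum_eq_card_filter_subtype S x)
    _ = _ := by
      simp only [Fintype.sum_prod_type_right, sum_const]
      rw [card_univ, Fintype.card_fun, Fintype.card_bool, Fintype.card_subtype_compl,
        Fintype.card_coe, Fintype.card_fin, Fintype.sum_bool_fun_card_true, Fintype.card_coe]

theorem two_pow_mul_sum_sq_juntaPMF {M m : ℕ} (A : ℕ → ℝ) (S : Finset (Fin M))
    (hS : #S = m) :
    (2 : ℝ) ^ M * ∑ x : Fin M → Bool, juntaPMF M m A S x ^ 2 =
      (2 : ℝ) ^ m * ∑ j ∈ range (m + 1), A j ^ 2 / (m.choose j : ℝ) := by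
  subst hS
  have hpow : (2 : ℝ) ^ (M - #S) * 2 ^ #S = 2 ^ M := by
    rw [← pow_add, Nat.sub_add_cancel (by simpa using card_le_univ S)]
  simp only [juntaPMF, sum_bitSum S fun k => (2 ^ #S / 2 ^ M * A k / (#S).choose k : ℝ) ^ 2,
    nsmul_eq_mul, mul_sum]
  refine sum_congr rfl fun j hj => ?_
  have hc : ((#S).choose j : ℝ) ≠ 0 := by
    exact_mod_cast (Nat.choose_pos (Nat.lt_succ_iff.1 (mem_range.1 hj))).ne'
  rw [← hpow]
  field_simp
  push_cast
  ring

theorem binPMF_half {m j : ℕ} (hj : j ≤ m) : binPMF m (1 / 2) j = m.choose j / 2 ^ m := by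
  rw [binPMF, show (1 : ℝ) - 1 / 2 = 1 / 2 by norm_num, mul_assoc, ← pow_add,
    Nat.add_sub_cancel' hj, one_div, inv_pow, div_eq_mul_inv]

theorem chiSqCube_uniformPMF (M : ℕ) (P : (Fin M → Bool) → ℝ) :
    chiSqCube M P (uniformPMF M) = 2 ^ M * ∑ x, P x ^ 2 - 1 := by
  simp only [chiSqCube, uniformPMF, div_div_eq_mul_div, div_one, mul_sum, mul_comm]

theorem chiSqNat_binPMF_half (m : ℕ) (A : ℕ → ℝ) :
    chiSqNat m A (binPMF m (1 / 2)) =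
      2 ^ m * ∑ j ∈ range (m + 1), A j ^ 2 / (m.choose j : ℝ) - 1 := by
  rw [chiSqNat, mul_sum]
  congr 1
  refine sum_congr rfl fun j hj => ?_
  rw [binPMF_half (Nat.lt_succ_iff.1 (mem_range.1 hj)), div_div_eq_mul_div, mul_div_assoc]
  ring

theorem junta_chi_square_general (m M : ℕ)
    (A : ℕ → ℝ)
    (S : Finset (Fin M)) (hS : S.card = m) :
    chiSqCube M (juntaPMF M m A S) (uniformPMF M) =
      chiSqNat m A (binPMF m (1 / 2)) ∧
    (2 : ℝ) ^ M * ∑ x : Fin M → Bool, (juntaPMF M m A S x) ^ 2 =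
      (2 : ℝ) ^ m * ∑ j ∈ Finset.range (m + 1), (A j) ^ 2 / (m.choose j : ℝ) := by
  have h := two_pow_mul_sum_sq_juntaPMF A S hS
  exact ⟨by rw [chiSqCube_uniformPMF, chiSqNat_binPMF_half, h], h⟩

/-- `χ²(P_S^A, U_M) = χ²(A, Bin(m, 1/2))`; equivalently
`2^M Σ_x P_S^A(x)² = 2^m Σ_j A(j)²/binom(m,j)`. -/
theorem junta_chi_square (m M : ℕ) (hm : 0 < m) (hmM : m < M)
    (A : ℕ → ℝ) (hA0 : ∀ x, 0 ≤ A x) (hAsupp : ∀ x, m < x → A x = 0)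
    (hA1 : ∑ x ∈ Finset.range (m + 1), A x = 1)
    (S : Finset (Fin M)) (hS : S.card = m) :
    chiSqCube M (juntaPMF M m A S) (uniformPMF M) =
      chiSqNat m A (binPMF m (1 / 2)) ∧
    (2 : ℝ) ^ M * ∑ x : Fin M → Bool, (juntaPMF M m A S x) ^ 2 =
      (2 : ℝ) ^ m * ∑ j ∈ Finset.range (m + 1), (A j) ^ 2 / (m.choose j : ℝ) :=
  junta_chi_square_general m M A S hS
end

section
/- Let m < M be positive integers, let A be a probability distribution on {0,1,...,m}, and let S, S' ⊆ {1,...,M} with |S| = |S'| = m. Then χ_{U_M}(P_S^A, P_{S'}^A) = Σ_{t=1}^{m} binom(|S∩S'|, t) · a_t² / binom(m,t)², where a_t := E_{X∼A}[K_t(X;m)] and binom(|S∩S'|,t) = 0 when t > |S∩S'|. -/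
open Finset

theorem Nat.choose_mul_choose_sub_comm (n a b : ℕ) :
    n.choose a * (n - a).choose b = n.choose b * (n - b).choose a := by
  have vanish : ∀ a b, n < a + b → n.choose a * (n - a).choose b = 0 := fun a b h => by
    rcases le_or_gt a n with ha | ha
    · rw [Nat.choose_eq_zero_of_lt (by omega : n - a < b), mul_zero]
    · rw [Nat.choose_eq_zero_of_lt ha, zero_mul]
  rcases le_or_gt (a + b) n with h | h
  · have ha := Nat.choose_mul (n := n) (Nat.le_add_right a b)
    have hb := Nat.choose_mul (n := n) (Nat.le_add_left b a)
    rw [Nat.add_sub_cancel_left] at ha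
    rw [Nat.add_sub_cancel] at hb
    rw [← ha, ← hb, Nat.choose_symm_add]
  · rw [vanish a b h, vanish b a (by omega)]

theorem Nat.choose_mul_choose_mul_choose_sub_comm {m w t j : ℕ} (hjt : j ≤ t) (hjw : j ≤ w) :
    m.choose w * (w.choose j * (m - w).choose (t - j)) =
      m.choose t * (t.choose j * (m - t).choose (w - j)) := by
  have hw : m - w = (m - j) - (w - j) := by omega
  have ht : m - t = (m - j) - (t - j) := by omega
  calc m.choose w * (w.choose j * (m - w).choose (t - j))
      = m.choose j * ((m - j).choose (w - j) * ((m - j) - (w - j)).choose (t - j)) := by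
        rw [← hw, ← mul_assoc, Nat.choose_mul hjw, mul_assoc]
    _ = m.choose j * ((m - j).choose (t - j) * ((m - j) - (t - j)).choose (w - j)) := by
        rw [Nat.choose_mul_choose_sub_comm]
    _ = m.choose t * (t.choose j * (m - t).choose (w - j)) := by
        rw [← ht, ← mul_assoc, ← Nat.choose_mul hjt, mul_assoc]

theorem choose_mul_kravchuk (m t w : ℕ) :
    (m.choose w : ℝ) * kravchuk m t w = m.choose t * kravchuk m w t := by
  have truncate : ∀ a b, ∑ j ∈ range (min a b + 1),
      (-1 : ℝ) ^ j * b.choose j * (m - b).choose (a - j) = kravchuk m a b := fun a b =>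
    sum_subset (range_subset_range.2 (by omega)) fun j hj hj' => by
      simp only [mem_range] at hj hj'
      simp [Nat.choose_eq_zero_of_lt (show b < j by omega)]
  rw [← truncate t w, ← truncate w t, min_comm, mul_sum, mul_sum]
  refine sum_congr rfl fun j hj => ?_
  have hj : j ≤ t ∧ j ≤ w := by simp only [mem_range] at hj; omega
  have key := congrArg (Nat.cast : ℕ → ℝ) (Nat.choose_mul_choose_mul_choose_sub_comm
    (m := m) hj.1 hj.2)
  push_cast at key
  linear_combination (-1 : ℝ) ^ j * key

theorem sum_range_kravchuk_mul {n t : ℕ} (ht : t ≤ n) (g : ℕ → ℝ) :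
    ∑ w ∈ range (n + 1), kravchuk n w t * g w =
      ∑ j ∈ range (t + 1), ∑ b ∈ range (n - t + 1),
        (-1 : ℝ) ^ j * t.choose j * (n - t).choose b * g (j + b) := by
  set F : ℕ → ℕ → ℝ := fun j b => (-1 : ℝ) ^ j * t.choose j * (n - t).choose b * g (j + b)
  have diag : ∀ w, kravchuk n w t * g w = ∑ j ∈ range (w + 1), F j (w - j) := fun w => by
    rw [kravchuk, sum_mul]
    refine sum_congr rfl fun j hj => ?_
    simp only [F, Nat.add_sub_cancel' (Nat.lt_succ_iff.1 (mem_range.1 hj))]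
  simp_rw [diag, sum_range_diag_flip]
  symm
  refine sum_subset_zero_on_sdiff (range_subset_range.2 (by omega)) ?_ ?_
  · intro j hj
    simp only [mem_sdiff, mem_range] at hj
    simp [F, Nat.choose_eq_zero_of_lt (show t < j by omega)]
  · intro j hj
    refine sum_subset_zero_on_sdiff (range_subset_range.2 (by simp at hj; omega)) ?_
      (fun _ _ => rfl)
    intro b hb
    simp only [mem_sdiff, mem_range] at hb
    simp [F, Nat.choose_eq_zero_of_lt (show n - t < b by omega)]

section Walsh

variable {ι R : Type*} [DecidableEq ι] [CommRing R]

theorem neg_one_pow_card_inter_eq_prod (s t : Finset ι) :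
    (-1 : R) ^ #(s ∩ t) = ∏ i ∈ s, if i ∈ t then -1 else 1 := by
  rw [prod_ite_mem, prod_const]

theorem sum_powerset_neg_one_pow_card_inter (s t : Finset ι) :
    ∑ u ∈ s.powerset, (-1 : R) ^ #(t ∩ u) = if Disjoint s t then 2 ^ #s else 0 := by
  simp_rw [inter_comm t, neg_one_pow_card_inter_eq_prod, ← prod_one_add]
  split_ifs with h
  · rw [prod_congr rfl fun i hi => by rw [if_neg (disjoint_left.1 h hi)], prod_const]
    norm_num
  · obtain ⟨i, his, hit⟩ := not_disjoint_iff.1 h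
    exact prod_eq_zero his (by simp [hit])

theorem neg_one_pow_card_inter_mul_neg_one_pow_card_inter (s t u : Finset ι) :
    (-1 : R) ^ #(s ∩ t) * (-1) ^ #(s ∩ u) = (-1) ^ #(s ∩ symmDiff t u) := by
  simp_rw [neg_one_pow_card_inter_eq_prod, ← prod_mul_distrib]
  refine prod_congr rfl fun i _ => ?_
  by_cases hit : i ∈ t <;> by_cases hiu : i ∈ u <;> simp [mem_symmDiff, hit, hiu]

theorem Finset.sum_powerset_eq_sum_powerset_sum_powerset_sdiff {β : Type*} [AddCommMonoid β]
    {s u : Finset ι} (hs : s ⊆ u) (f : Finset ι → Finset ι → β) :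
    ∑ v ∈ u.powerset, f (v ∩ s) (v \ s) = ∑ a ∈ s.powerset, ∑ b ∈ (u \ s).powerset, f a b := by
  rw [← sum_product']
  refine sum_nbij' (fun v => (v ∩ s, v \ s)) (fun p => p.1 ∪ p.2) ?_ ?_ ?_ ?_ (fun _ _ => rfl)
  · intro v hv
    simp only [mem_powerset, mem_product] at hv ⊢
    exact ⟨inter_subset_right, sdiff_subset_sdiff hv subset_rfl⟩
  · intro p hp
    simp only [mem_powerset, mem_product] at hp ⊢
    exact union_subset (hp.1.trans hs) (hp.2.trans sdiff_subset)
  · intro v _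
    exact sup_inf_sdiff v s
  · intro p hp
    simp only [mem_powerset, mem_product, subset_sdiff] at hp
    simp only [union_inter_distrib_right, union_sdiff_distrib, inter_eq_left.2 hp.1,
      sdiff_eq_self_of_disjoint hp.2.2, disjoint_iff_inter_eq_empty.1 hp.2.2,
      sdiff_eq_empty_iff_subset.2 hp.1, union_empty, empty_union]

theorem sum_powerset_neg_one_pow_card_inter_mul {s t : Finset ι} (hts : t ⊆ s) (g : ℕ → ℝ) :
    ∑ v ∈ s.powerset, (-1 : ℝ) ^ #(t ∩ v) * g #v =
      ∑ w ∈ range (#s + 1), kravchuk #s w #t * g w := by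
  have split : ∀ v : Finset ι, (-1 : ℝ) ^ #(t ∩ v) * g #v =
      (-1 : ℝ) ^ #(v ∩ t) * g (#(v ∩ t) + #(v \ t)) := fun v => by
    rw [inter_comm, card_inter_add_card_sdiff]
  rw [sum_congr rfl fun v _ => split v,
    sum_powerset_eq_sum_powerset_sum_powerset_sdiff hts (fun a b => (-1 : ℝ) ^ #a * g (#a + #b)),
    sum_range_kravchuk_mul (card_le_card hts), ← card_sdiff_of_subset hts,
    sum_congr rfl fun a _ => sum_powerset_apply_card (fun b => (-1 : ℝ) ^ #a * g (#a + b)),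
    sum_powerset_apply_card
      (fun j => ∑ b ∈ range (#(s \ t) + 1), (#(s \ t)).choose b • ((-1 : ℝ) ^ j * g (j + b)))]
  refine sum_congr rfl fun j _ => ?_
  rw [nsmul_eq_mul, mul_sum]
  refine sum_congr rfl fun b _ => ?_
  rw [nsmul_eq_mul]
  ring

variable [Fintype ι]

def walshTransform (f : Finset ι → R) (t : Finset ι) : R :=
  ∑ u, f u * (-1) ^ #(t ∩ u)

theorem walshTransform_const_mul (c : R) (f : Finset ι → R) (t : Finset ι) :
    walshTransform (fun u => c * f u) t = c * walshTransform f t := by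
  simp only [walshTransform, mul_sum, mul_assoc]

theorem sum_neg_one_pow_card_inter_mul_neg_one_pow_card_inter (u v : Finset ι) :
    ∑ t : Finset ι, (-1 : R) ^ #(t ∩ u) * (-1) ^ #(t ∩ v) =
      if u = v then 2 ^ Fintype.card ι else 0 := by
  simp_rw [neg_one_pow_card_inter_mul_neg_one_pow_card_inter, inter_comm _ (symmDiff u v)]
  rw [← powerset_univ, sum_powerset_neg_one_pow_card_inter, card_univ]
  simp_rw [← top_eq_univ, top_disjoint, symmDiff_eq_bot]

theorem sum_walshTransform_mul_walshTransform (f g : Finset ι → R) :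
    ∑ t, walshTransform f t * walshTransform g t = 2 ^ Fintype.card ι * ∑ u, f u * g u := by
  calc ∑ t, walshTransform f t * walshTransform g t
      = ∑ u, ∑ v, f u * g v * ∑ t : Finset ι, (-1 : R) ^ #(t ∩ u) * (-1) ^ #(t ∩ v) := by
        simp_rw [walshTransform, sum_mul_sum, mul_sum]
        rw [sum_comm]
        refine sum_congr rfl fun u _ => ?_
        rw [sum_comm]
        exact sum_congr rfl fun v _ => sum_congr rfl fun t _ => by ring
    _ = 2 ^ Fintype.card ι * ∑ u, f u * g u := by
        rw [mul_sum]
        refine sum_congr rfl fun u _ => ?_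
        simp [sum_neg_one_pow_card_inter_mul_neg_one_pow_card_inter, mul_comm]

theorem walshTransform_comp_card_inter (s t : Finset ι) (g : ℕ → ℝ) :
    walshTransform (fun u => g #(s ∩ u)) t =
      if t ⊆ s then 2 ^ (Fintype.card ι - #s) * ∑ w ∈ range (#s + 1), kravchuk #s w #t * g w
      else 0 := by
  have split : ∀ u : Finset ι, g #(s ∩ u) * (-1) ^ #(t ∩ u) =
      (-1 : ℝ) ^ #(t ∩ (u ∩ s)) * g #(u ∩ s) * (-1) ^ #(t ∩ (u \ s)) :=
    fun u => by
      rw [mul_right_comm, neg_one_pow_card_inter_mul_neg_one_pow_card_inter,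
        (disjoint_sdiff_inter u s).symm.symmDiff_eq_sup,
        show u ∩ s ⊔ u \ s = u from sup_inf_sdiff u s, inter_comm u s, mul_comm]
  rw [walshTransform, ← powerset_univ, sum_congr rfl fun u _ => split u,
    sum_powerset_eq_sum_powerset_sum_powerset_sdiff (subset_univ s)
      (fun a b => (-1 : ℝ) ^ #(t ∩ a) * g #a * (-1) ^ #(t ∩ b))]
  simp_rw [← mul_sum, sum_powerset_neg_one_pow_card_inter, ← sum_mul, ← compl_eq_univ_sdiff,
    disjoint_compl_left_iff, card_compl]
  split_ifs with h
  · rw [sum_powerset_neg_one_pow_card_inter_mul h, mul_comm]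
  · rw [mul_zero]

end Walsh

theorem Fintype.sum_bool_fun_eq_sum_finset {ι β : Type*} [Fintype ι] [DecidableEq ι]
    [AddCommMonoid β] (f : (ι → Bool) → β) :
    ∑ x, f x = ∑ u : Finset ι, f (fun i => decide (i ∈ u)) :=
  (Fintype.sum_equiv (ι := Finset ι)
    { toFun := fun u i => decide (i ∈ u)
      invFun := fun x => ({i | x i} : Finset ι)
      left_inv := fun u => by ext; simp
      right_inv := fun x => by funext; simp } _ _ fun _ => rfl).symm

theorem juntaPMF_decide (M m : ℕ) (A : ℕ → ℝ) (S u : Finset (Fin M)) :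
    juntaPMF M m A S (fun i => decide (i ∈ u)) =
      2 ^ m / 2 ^ M * (A #(S ∩ u) / m.choose #(S ∩ u)) := by
  have hbit : bitSum S (fun i => decide (i ∈ u)) = #(S ∩ u) := by
    rw [bitSum, ← filter_mem_eq_inter]
    simp
  rw [juntaPMF, hbit, mul_div_assoc]

theorem walshTransform_juntaPMF {M m : ℕ} (A : ℕ → ℝ) {S : Finset (Fin M)} (hS : #S = m)
    (T : Finset (Fin M)) :
    walshTransform (fun u => juntaPMF M m A S (fun i => decide (i ∈ u))) T =
      if T ⊆ S then (∑ x ∈ range (m + 1), A x * kravchuk m #T x) / m.choose #T else 0 := by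
  have hmM : m ≤ M := hS ▸ (card_le_univ S).trans_eq (Fintype.card_fin M)
  simp_rw [juntaPMF_decide]
  rw [walshTransform_const_mul, walshTransform_comp_card_inter S T (fun n => A n / m.choose n),
    Fintype.card_fin, hS]
  split_ifs with hTS
  · have htm : #T ≤ m := hS ▸ card_le_card hTS
    have hscale : (2 : ℝ) ^ m / 2 ^ M * 2 ^ (M - m) = 1 := by
      rw [pow_sub₀ _ two_ne_zero hmM]
      field_simp
    rw [← mul_assoc, hscale, one_mul, sum_div]
    refine sum_congr rfl fun w hw => ?_
    have hwm : w ≤ m := Nat.lt_succ_iff.1 (mem_range.1 hw)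
    have hCw : (m.choose w : ℝ) ≠ 0 := Nat.cast_ne_zero.2 (Nat.choose_pos hwm).ne'
    have hCt : (m.choose #T : ℝ) ≠ 0 := Nat.cast_ne_zero.2 (Nat.choose_pos htm).ne'
    rw [mul_div_assoc', div_eq_div_iff hCw hCt]
    linear_combination (-A w) * choose_mul_kravchuk m #T w
  · rw [mul_zero]

theorem chiCorr_juntaPMF {m M : ℕ} (A : ℕ → ℝ) {S S' : Finset (Fin M)} (hS : #S = m)
    (hS' : #S' = m) :
    chiCorr (juntaPMF M m A S) (juntaPMF M m A S') (uniformPMF M) =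
      ∑ T ∈ (S ∩ S').powerset,
        ((∑ x ∈ range (m + 1), A x * kravchuk m #T x) / m.choose #T) ^ 2 - 1 := by
  simp_rw [chiCorr, uniformPMF, one_div, div_inv_eq_mul, ← sum_mul,
    Fintype.sum_bool_fun_eq_sum_finset, mul_comm _ ((2 : ℝ) ^ M)]
  rw [show (2 : ℝ) ^ M = 2 ^ Fintype.card (Fin M) by rw [Fintype.card_fin],
    ← sum_walshTransform_mul_walshTransform]
  simp_rw [walshTransform_juntaPMF A hS, walshTransform_juntaPMF A hS', ite_zero_mul_ite_zero,
    ← subset_inter_iff, ← sum_filter, filter_subset_univ, sq]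

theorem junta_pairwise_correlation_general (m M : ℕ) (A : ℕ → ℝ)
    (hA1 : ∑ x ∈ Finset.range (m + 1), A x = 1)
    (S S' : Finset (Fin M)) (hS : S.card = m) (hS' : S'.card = m) :
    chiCorr (juntaPMF M m A S) (juntaPMF M m A S') (uniformPMF M) =
      ∑ t ∈ Finset.Icc 1 m,
        ((S ∩ S').card.choose t : ℝ) *
          (∑ x ∈ Finset.range (m + 1), A x * kravchuk m t x) ^ 2 /
          ((m.choose t : ℝ)) ^ 2 := by
  set a : ℕ → ℝ := fun t => (∑ x ∈ range (m + 1), A x * kravchuk m t x) / m.choose t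
  have ha0 : a 0 = 1 := by simp [a, kravchuk, hA1]
  have hk : #(S ∩ S') ≤ m := hS ▸ card_le_card inter_subset_left
  have extend : ∑ t ∈ range (#(S ∩ S') + 1), (#(S ∩ S')).choose t • a t ^ 2 =
      ∑ t ∈ range (m + 1), (#(S ∩ S')).choose t • a t ^ 2 :=
    sum_subset (range_subset_range.2 (by omega)) fun t ht ht' => by
      simp only [mem_range] at ht ht'
      rw [Nat.choose_eq_zero_of_lt (by omega), zero_smul]
  rw [chiCorr_juntaPMF A hS hS', sum_powerset_apply_card (fun t => a t ^ 2), extend,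
    sum_range_eq_add_Ico _ (Nat.succ_pos m), Nat.succ_eq_add_one, Ico_add_one_right_eq_Icc, ha0]
  simp only [a, Nat.choose_zero_right, one_pow, one_smul, add_sub_cancel_left, nsmul_eq_mul,
    div_pow, mul_div_assoc]

/-- Exact formula for the pairwise correlation of two hidden junta distributions:
`χ_{U_M}(P_S^A, P_{S'}^A) = Σ_{t=1}^m binom(|S∩S'|, t) a_t² / binom(m,t)²`,
where `a_t = E_{X∼A}[K_t(X;m)]`. -/
theorem junta_pairwise_correlation (m M : ℕ) (hm : 0 < m) (hmM : m < M)
    (A : ℕ → ℝ) (hA0 : ∀ x, 0 ≤ A x) (hAsupp : ∀ x, m < x → A x = 0)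
    (hA1 : ∑ x ∈ Finset.range (m + 1), A x = 1)
    (S S' : Finset (Fin M)) (hS : S.card = m) (hS' : S'.card = m) :
    chiCorr (juntaPMF M m A S) (juntaPMF M m A S') (uniformPMF M) =
      ∑ t ∈ Finset.Icc 1 m,
        ((S ∩ S').card.choose t : ℝ) *
          (∑ x ∈ Finset.range (m + 1), A x * kravchuk m t x) ^ 2 /
          ((m.choose t : ℝ)) ^ 2 :=
  junta_pairwise_correlation_general m M A hA1 S S' hS hS'
end

section
/- Let m < M be positive integers, let A be a probability distribution on {0,1,...,m}, let S ⊆ {1,...,M} with |S| = m, and let 0 ≤ δ ≤ √m / 2. Then d_TV(P_S^A, U_M^{S, δ/√m}) = d_TV(A, Bin(m, 1/2 + δ/√m)). -/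
open Finset

/-- The product distribution `U_M^{S,η}` on `{0,1}^M`: coordinate `i` has mean `1/2 + η`
if `i ∈ S` and mean `1/2` otherwise. -/
noncomputable def prodPMF (M : ℕ) (S : Finset (Fin M)) (η : ℝ) (x : Fin M → Bool) : ℝ :=
  ∏ i : Fin M, if i ∈ S then (if x i then 1 / 2 + η else 1 / 2 - η) else (1 / 2 : ℝ)

/-- Total variation distance between pmfs on `{0,1}^M`. -/
noncomputable def dTVCube (M : ℕ) (P Q : (Fin M → Bool) → ℝ) : ℝ :=
  (∑ x : Fin M → Bool, |P x - Q x|) / 2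

/-- Total variation distance between pmfs on `{0,…,m}`. -/
noncomputable def dTVNat (m : ℕ) (P Q : ℕ → ℝ) : ℝ :=
  (∑ x ∈ Finset.range (m + 1), |P x - Q x|) / 2


/-! Both pmfs on the cube depend on `x` only through `k = bitSum S x`, so their difference is
constant on each level set `{x | bitSum S x = k}`, which has `2 ^ (M - m) * m.choose k` elements.
On that level set the difference is `(A k - Bin(m, 1/2 + η) k) / (2 ^ (M - m) * m.choose k)`, so
summing over the cube level set by level set gives exactly the sum defining `dTVNat`. -/

section BooleanCube

variable {ι : Type*} [Fintype ι] [DecidableEq ι]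

lemma sum_boolFun_eq_sum_finset {β : Type*} [AddCommMonoid β] (f : (ι → Bool) → β) :
    ∑ x, f x = ∑ T : Finset ι, f (fun i => decide (i ∈ T)) :=
  Fintype.sum_equiv ⟨fun x => ({i | x i} : Finset ι), fun T i => decide (i ∈ T),
    fun x => by funext; simp, fun T => by ext; simp⟩ _ _ fun x => by simp

lemma sum_card_inter_eq_smul_sum_powerset {β : Type*} [AddCommMonoid β] (S : Finset ι)
    (g : ℕ → β) :
    ∑ T : Finset ι, g #(S ∩ T) = 2 ^ (Fintype.card ι - #S) • ∑ U ∈ S.powerset, g #U := by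
  have hsplit : ∑ T : Finset ι, g #(S ∩ T) = ∑ p ∈ S.powerset ×ˢ Sᶜ.powerset, g #p.1 := by
    refine sum_nbij' (fun T => (S ∩ T, Sᶜ ∩ T)) (fun p => p.1 ∪ p.2) ?_ ?_ ?_ ?_ ?_
    · simp
    · simp
    · intro T _; ext i; by_cases i ∈ S <;> simp [*]
    · rintro ⟨U, V⟩ hUV
      simp only [mem_product, mem_powerset] at hUV
      refine Prod.ext ?_ ?_ <;> ext i <;> grind [mem_compl]
    · simp
  rw [hsplit, sum_product, smul_sum]
  simp [card_compl]

lemma sum_comp_card_filter {β : Type*} [AddCommMonoid β] (S : Finset ι) (g : ℕ → β) :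
    ∑ x : ι → Bool, g #{i ∈ S | x i} =
      ∑ k ∈ range (#S + 1), (2 ^ (Fintype.card ι - #S) * (#S).choose k) • g k := by
  rw [sum_boolFun_eq_sum_finset]
  simp only [decide_eq_true_eq, filter_mem_eq_inter, sum_card_inter_eq_smul_sum_powerset,
    sum_powerset_apply_card, smul_sum, mul_smul]

lemma prod_ite_mem_ite (S : Finset ι) (x : ι → Bool) (a b c : ℝ) :
    (∏ i, if i ∈ S then (if x i then a else b) else c) =
      a ^ #{i ∈ S | x i} * b ^ (#S - #{i ∈ S | x i}) * c ^ (Fintype.card ι - #S) := by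
  rw [prod_ite, prod_ite, prod_const, prod_const, prod_const, filter_mem_eq_inter, univ_inter,
    filter_not, card_sdiff_of_subset (filter_subset _ _), filter_notMem_eq_sdiff,
    ← compl_eq_univ_sdiff, card_compl]

end BooleanCube

lemma juntaPMF_sub_prodPMF {M m : ℕ} {S : Finset (Fin M)} (hS : #S = m) (A : ℕ → ℝ) (η : ℝ)
    (x : Fin M → Bool) :
    juntaPMF M m A S x - prodPMF M S η x =
      (A (bitSum S x) - binPMF m (1 / 2 + η) (bitSum S x)) /
        (2 ^ (M - m) * m.choose (bitSum S x) : ℕ) := by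
  have hmM : m ≤ M := by simpa [hS] using card_le_univ S
  have hk : bitSum S x ≤ m := hS ▸ card_filter_le _ _
  have hchoose : (m.choose (bitSum S x) : ℝ) ≠ 0 := by exact_mod_cast (Nat.choose_pos hk).ne'
  have h2M : (2 : ℝ) ^ M = 2 ^ m * 2 ^ (M - m) := by rw [← pow_add, Nat.add_sub_cancel' hmM]
  rw [juntaPMF, prodPMF, prod_ite_mem_ite, binPMF, Fintype.card_fin, hS, one_div_pow, h2M,
    show #{i ∈ S | x i} = bitSum S x from rfl]
  push_cast
  field_simp
  ring

lemma dTVCube_juntaPMF_prodPMF {M m : ℕ} {S : Finset (Fin M)} (hS : #S = m) (A : ℕ → ℝ)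
    (η : ℝ) :
    dTVCube M (juntaPMF M m A S) (prodPMF M S η) = dTVNat m A (binPMF m (1 / 2 + η)) := by
  have hfiber := sum_comp_card_filter S fun k =>
    |A k - binPMF m (1 / 2 + η) k| / (2 ^ (M - m) * m.choose k : ℕ)
  rw [hS, Fintype.card_fin] at hfiber
  rw [dTVCube, dTVNat]
  congr 1
  calc ∑ x, |juntaPMF M m A S x - prodPMF M S η x|
      = ∑ x : Fin M → Bool, |A (bitSum S x) - binPMF m (1 / 2 + η) (bitSum S x)| /
          (2 ^ (M - m) * m.choose (bitSum S x) : ℕ) := by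
        simp_rw [juntaPMF_sub_prodPMF hS, abs_div, Nat.abs_cast]
    _ = _ := hfiber
    _ = ∑ k ∈ range (m + 1), |A k - binPMF m (1 / 2 + η) k| := by
        refine sum_congr rfl fun k hk => ?_
        rw [nsmul_eq_mul, mul_div_cancel₀]
        have := Nat.choose_pos (Nat.lt_succ_iff.mp (mem_range.mp hk))
        positivity

theorem junta_product_tv_general (m M : ℕ) (A : ℕ → ℝ) (S : Finset (Fin M)) (hS : S.card = m) (δ : ℝ) :
    dTVCube M (juntaPMF M m A S) (prodPMF M S (δ / Real.sqrt m)) =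
      dTVNat m A (binPMF m (1 / 2 + δ / Real.sqrt m)) :=
  dTVCube_juntaPMF_prodPMF hS A _

/-- `d_TV(P_S^A, U_M^{S, δ/√m}) = d_TV(A, Bin(m, 1/2 + δ/√m))`. -/
theorem junta_product_tv (m M : ℕ) (hm : 0 < m) (hmM : m < M)
    (A : ℕ → ℝ) (hA0 : ∀ x, 0 ≤ A x) (hAsupp : ∀ x, m < x → A x = 0)
    (hA1 : ∑ x ∈ Finset.range (m + 1), A x = 1)
    (S : Finset (Fin M)) (hS : S.card = m)
    (δ : ℝ) (hδ0 : 0 ≤ δ) (hδ1 : δ ≤ Real.sqrt m / 2) :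
    dTVCube M (juntaPMF M m A S) (prodPMF M S (δ / Real.sqrt m)) =
      dTVNat m A (binPMF m (1 / 2 + δ / Real.sqrt m)) :=
  junta_product_tv_general m M A S hS δ
end

section
/- Let m < M be positive integers, let A be a probability distribution on {0,1,...,m}, let S ⊆ {1,...,M} with |S| = m, and let δ ≥ 0. Then d_TV(P_S^A, Q_M^{S, δ/m}) = d_TV(A, IS(m, δ/m)). -/
open Finset

/-- `(−1)^{x_i}` for a bit `x_i`. -/
def sgn (b : Bool) : ℝ := if b then -1 else 1

/-- The Ising energy `(1/2) Σ_{i,j} θ_{ij} (−1)^{x_i + x_j}` with `θ_{ij} = η` for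
distinct `i, j ∈ S` and `θ_{ij} = 0` otherwise. -/
noncomputable def isingEnergy (M : ℕ) (S : Finset (Fin M)) (η : ℝ)
    (x : Fin M → Bool) : ℝ :=
  (1 / 2) * ∑ i : Fin M, ∑ j : Fin M,
    (if i ∈ S ∧ j ∈ S ∧ i ≠ j then η else 0) * sgn (x i) * sgn (x j)

/-- The Ising model `Q_M^{S,η}` on `{0,1}^M`, with pmf proportional to
`exp((1/2) Σ_{i,j} θ_{ij} (−1)^{x_i + x_j})`. -/
noncomputable def isingCubePMF (M : ℕ) (S : Finset (Fin M)) (η : ℝ)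
    (x : Fin M → Bool) : ℝ :=
  Real.exp (isingEnergy M S η x) / ∑ y : Fin M → Bool, Real.exp (isingEnergy M S η y)

/-- `h(n,x) = 2x² − 2nx + n(n−1)/2`. -/
noncomputable def hIsing (n x : ℕ) : ℝ :=
  2 * (x : ℝ) ^ 2 - 2 * (n : ℝ) * (x : ℝ) + (n : ℝ) * ((n : ℝ) - 1) / 2

/-- Partition function `Z_n(δ') = Σ_{x=0}^n binom(n,x) exp(h(n,x)δ')`. -/
noncomputable def Zpart (n : ℕ) (δ' : ℝ) : ℝ :=
  ∑ x ∈ Finset.range (n + 1), (n.choose x : ℝ) * Real.exp (hIsing n x * δ')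

/-- The pmf of the one-dimensional Ising distribution `IS(n, δ')` at `x`. -/
noncomputable def isingPMF (n : ℕ) (δ' : ℝ) (x : ℕ) : ℝ :=
  (n.choose x : ℝ) * Real.exp (hIsing n x * δ') / Zpart n δ'

/-!
Both distributions are uniform on each level set `{x | bitSum S x = k}` (of size
`2 ^ (M - m) * m.choose k`): `P_S^A` by construction, and `Q_M^{S,η}` because its energy
`η/2 · ((Σ_{i∈S} sgn x_i)² − m)` only depends on `bitSum S x`, where it equals `η · h(m, k)`.
Their level masses are `A k` and `IS(m, η) k`, and a sum over the cube of a function of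
`bitSum S x` collapses to a weighted sum over the levels, so the two total variation
distances agree term by term.
-/

theorem sum_comp_card_filter_eq_true {α β : Type*} [Fintype α] [DecidableEq α]
    [AddCommMonoid β] (f : ℕ → β) :
    ∑ y : α → Bool, f #{i | y i = true} =
      ∑ k ∈ range (Fintype.card α + 1), (Fintype.card α).choose k • f k := by
  rw [← card_univ, ← sum_powerset_apply_card]
  refine sum_nbij' (fun y => ({i | y i = true} : Finset α)) (fun T i => decide (i ∈ T))
    ?_ ?_ ?_ ?_ ?_ <;> intros
  all_goals first | (ext; simp) | simp

theorem bitSum_le_card {M : ℕ} (S : Finset (Fin M)) (x : Fin M → Bool) : bitSum S x ≤ #S :=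
  card_filter_le _ _

theorem sum_comp_bitSum {β : Type*} [AddCommMonoid β] {M : ℕ} (S : Finset (Fin M))
    (f : ℕ → β) :
    ∑ x, f (bitSum S x) = 2 ^ (M - #S) • ∑ k ∈ range (#S + 1), (#S).choose k • f k := by
  rw [← Fintype.sum_equiv (Equiv.piEquivPiSubtypeProd (· ∈ S) fun _ => Bool).symm
      (fun p => f #{i | p.1 i = true}) _ fun p => by simp [bitSum_eq_card_filter_subtype],
    Fintype.sum_prod_type]
  simp only [sum_const, card_univ, Fintype.card_fun, Fintype.card_bool,
    Fintype.card_subtype_compl, Fintype.card_coe, Fintype.card_fin]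
  rw [← smul_sum, sum_comp_card_filter_eq_true, Fintype.card_coe]

theorem sum_sum_ite_mem_ne_mul {ι R : Type*} [Fintype ι] [DecidableEq ι] [CommRing R]
    (S : Finset ι) (c : R) (a : ι → R) :
    ∑ i, ∑ j, (if i ∈ S ∧ j ∈ S ∧ i ≠ j then c else 0) * a i * a j =
      c * ((∑ i ∈ S, a i) ^ 2 - ∑ i ∈ S, a i ^ 2) := by
  set b : ι → R := fun i => if i ∈ S then a i else 0
  have hb : ∀ i j, (if i ∈ S ∧ j ∈ S ∧ i ≠ j then c else 0) * a i * a j =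
      c * (b i * b j) - if i = j then c * b i ^ 2 else 0 := by
    intro i j
    by_cases hi : i ∈ S <;> by_cases hj : j ∈ S <;> by_cases hij : i = j <;>
      simp_all [b, sq, mul_assoc]
  have hb1 : ∑ i, b i = ∑ i ∈ S, a i := by simp [b]
  have hb2 : ∑ i, b i ^ 2 = ∑ i ∈ S, a i ^ 2 := by simp [b, apply_ite (· ^ 2)]
  simp only [hb, sum_sub_distrib, sum_ite_eq, mem_univ, if_true, ← mul_sum, ← sum_mul]
  rw [hb1, hb2]
  ring

theorem sgn_sq (b : Bool) : sgn b ^ 2 = 1 := by cases b <;> norm_num [sgn]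

theorem sum_sgn {M : ℕ} (S : Finset (Fin M)) (x : Fin M → Bool) :
    ∑ i ∈ S, sgn (x i) = #S - 2 * bitSum S x := by
  have h : ∀ i, sgn (x i) = 1 - 2 * if x i = true then 1 else 0 := fun i => by
    cases x i <;> norm_num [sgn]
  simp only [h, sum_sub_distrib, ← mul_sum, sum_boole, sum_const, nsmul_eq_mul, mul_one, bitSum]

theorem isingEnergy_eq {M : ℕ} (S : Finset (Fin M)) (η : ℝ) (x : Fin M → Bool) :
    isingEnergy M S η x = η * hIsing #S (bitSum S x) := by
  rw [isingEnergy, sum_sum_ite_mem_ne_mul, sum_sgn]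
  simp only [sgn_sq, sum_const, nsmul_eq_mul, mul_one, hIsing]
  ring

theorem Zpart_pos (n : ℕ) (δ' : ℝ) : 0 < Zpart n δ' :=
  sum_pos (fun _ hk => mul_pos (Nat.cast_pos.2 (Nat.choose_pos (Nat.lt_succ_iff.1
    (mem_range.1 hk)))) (Real.exp_pos _)) ⟨0, mem_range.2 n.succ_pos⟩

theorem sum_exp_isingEnergy {M : ℕ} (S : Finset (Fin M)) (η : ℝ) :
    ∑ y, Real.exp (isingEnergy M S η y) = 2 ^ (M - #S) * Zpart #S η := by
  have h := sum_comp_bitSum S fun k => Real.exp (hIsing #S k * η)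
  beta_reduce at h
  simp only [isingEnergy_eq, mul_comm η, h, Zpart, nsmul_eq_mul]
  push_cast
  rfl

/-- The distribution on `{0,1}^M` that draws `k` from `p` and then a uniform point with
`bitSum S x = k`. -/
noncomputable def bitSumLift {M : ℕ} (S : Finset (Fin M)) (p : ℕ → ℝ) (x : Fin M → Bool) : ℝ :=
  p (bitSum S x) / (2 ^ (M - #S) * (#S).choose (bitSum S x))

theorem choose_bitSum_pos {M : ℕ} (S : Finset (Fin M)) (x : Fin M → Bool) :
    (0 : ℝ) < (#S).choose (bitSum S x) :=
  Nat.cast_pos.2 (Nat.choose_pos (bitSum_le_card S x))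

theorem juntaPMF_eq_bitSumLift {M : ℕ} (S : Finset (Fin M)) (A : ℕ → ℝ) :
    juntaPMF M #S A S = bitSumLift S A := by
  have hpow : (2 : ℝ) ^ M = 2 ^ (M - #S) * 2 ^ #S := by
    rw [← pow_add, Nat.sub_add_cancel (by simpa using card_le_univ S)]
  funext x
  have := choose_bitSum_pos S x
  rw [juntaPMF, bitSumLift, hpow]
  field_simp

theorem isingCubePMF_eq_bitSumLift {M : ℕ} (S : Finset (Fin M)) (η : ℝ) :
    isingCubePMF M S η = bitSumLift S (isingPMF #S η) := by
  funext x
  have := choose_bitSum_pos S x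
  have := Zpart_pos #S η
  rw [isingCubePMF, bitSumLift, isingPMF, sum_exp_isingEnergy, isingEnergy_eq, mul_comm η]
  field_simp

theorem dTVCube_bitSumLift {M : ℕ} (S : Finset (Fin M)) (p q : ℕ → ℝ) :
    dTVCube M (bitSumLift S p) (bitSumLift S q) = dTVNat #S p q := by
  have h := sum_comp_bitSum S fun k =>
    |p k / (2 ^ (M - #S) * (#S).choose k) - q k / (2 ^ (M - #S) * (#S).choose k)|
  beta_reduce at h
  rw [dTVCube, dTVNat]
  simp only [bitSumLift, h, smul_sum]
  congr 1
  refine sum_congr rfl fun k hk => ?_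
  have : (0 : ℝ) < (#S).choose k :=
    Nat.cast_pos.2 (Nat.choose_pos (Nat.lt_succ_iff.1 (mem_range.1 hk)))
  rw [← sub_div, abs_div, abs_of_pos (by positivity : (0 : ℝ) < 2 ^ (M - #S) * (#S).choose k),
    nsmul_eq_mul, nsmul_eq_mul]
  field_simp
  push_cast
  ring

theorem junta_ising_tv_general (m M : ℕ) (A : ℕ → ℝ) (S : Finset (Fin M)) (hS : S.card = m) (δ : ℝ) :
    dTVCube M (juntaPMF M m A S) (isingCubePMF M S (δ / m)) =
      dTVNat m A (isingPMF m (δ / m)) := by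
  subst hS
  rw [juntaPMF_eq_bitSumLift, isingCubePMF_eq_bitSumLift, dTVCube_bitSumLift]

/-- `d_TV(P_S^A, Q_M^{S, δ/m}) = d_TV(A, IS(m, δ/m))`. -/
theorem junta_ising_tv (m M : ℕ) (hm : 0 < m) (hmM : m < M)
    (A : ℕ → ℝ) (hA0 : ∀ x, 0 ≤ A x) (hAsupp : ∀ x, m < x → A x = 0)
    (hA1 : ∑ x ∈ Finset.range (m + 1), A x = 1)
    (S : Finset (Fin M)) (hS : S.card = m)
    (δ : ℝ) (hδ : 0 ≤ δ) :
    dTVCube M (juntaPMF M m A S) (isingCubePMF M S (δ / m)) =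
      dTVNat m A (isingPMF m (δ / m)) :=
  junta_ising_tv_general m M A S hS δ
end

section
/- Let m be a positive integer, x ∈ {0,1,...,m}, and 0 < δ ≤ √m / 2. Then F_{m,x}(δ/√m) / F_{m,x}(0) ≤ exp(4δx/√m − 2δ√m). -/
/-!
Writing `1/2 ± η = (1 ± 2η)/2`, the ratio `F_{m,x}(η) / F_{m,x}(0)` equals
`(1 + 2η)^x (1 - 2η)^(m-x)`, and `1 + t ≤ exp t` bounds this by `exp (2η (x - (m - x)))`.
With `η = δ/√m` the exponent is `4δx/√m − 2δ√m`.
-/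

open Real

lemma one_add_pow_mul_one_sub_pow_le_exp {a : ℝ} (ha : |a| ≤ 1) (k l : ℕ) :
    (1 + a) ^ k * (1 - a) ^ l ≤ exp (a * (k - l)) := by
  obtain ⟨ha₁, ha₂⟩ := abs_le.mp ha
  calc (1 + a) ^ k * (1 - a) ^ l ≤ exp a ^ k * exp (-a) ^ l := by
        have h₁ : 1 + a ≤ exp a := by linarith [add_one_le_exp a]
        have h₂ : 1 - a ≤ exp (-a) := by linarith [add_one_le_exp (-a)]
        gcongr
        all_goals linarith
    _ = exp (a * (k - l)) := by
        rw [← exp_nat_mul, ← exp_nat_mul, ← exp_add]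
        ring_nf

lemma binPMF_half_add (m x : ℕ) (η : ℝ) :
    binPMF m (1 / 2 + η) x = binPMF m (1 / 2) x * ((1 + 2 * η) ^ x * (1 - 2 * η) ^ (m - x)) := by
  rw [binPMF, binPMF, show 1 / 2 + η = 1 / 2 * (1 + 2 * η) by ring,
    show 1 - 1 / 2 * (1 + 2 * η) = 1 / 2 * (1 - 2 * η) by ring, mul_pow, mul_pow]
  ring

theorem binomial_ratio_bound_general (m : ℕ) (x : ℕ) (hx : x ≤ m)
    (δ : ℝ) (hδ0 : 0 < δ) (hδ1 : δ ≤ Real.sqrt m / 2) :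
    binPMF m (1 / 2 + δ / Real.sqrt m) x / binPMF m (1 / 2) x ≤
      Real.exp (4 * δ * x / Real.sqrt m - 2 * δ * Real.sqrt m) := by
  set s := sqrt m
  have hs : 0 < s := by linarith
  have hη : |2 * (δ / s)| ≤ 1 := by
    rw [abs_of_pos (by positivity), ← mul_div_assoc, div_le_one hs]
    linarith
  have hexp : 2 * (δ / s) * (x - (m - x : ℕ)) = 4 * δ * x / s - 2 * δ * s := by
    have hss : s ^ 2 = m := sq_sqrt (Nat.cast_nonneg m)
    rw [Nat.cast_sub hx]
    field_simp
    linear_combination 2 * hss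
  refine div_le_of_le_mul₀ (by unfold binPMF; positivity) (exp_pos _).le ?_
  rw [binPMF_half_add, mul_comm (exp _), ← hexp]
  exact mul_le_mul_of_nonneg_left (one_add_pow_mul_one_sub_pow_le_exp hη _ _)
    (by unfold binPMF; positivity)

/-- Ratio bound for binomial pmfs:
`F_{m,x}(δ/√m) / F_{m,x}(0) ≤ exp(4δx/√m − 2δ√m)`. -/
theorem binomial_ratio_bound (m : ℕ) (hm : 0 < m) (x : ℕ) (hx : x ≤ m)
    (δ : ℝ) (hδ0 : 0 < δ) (hδ1 : δ ≤ Real.sqrt m / 2) :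
    binPMF m (1 / 2 + δ / Real.sqrt m) x / binPMF m (1 / 2) x ≤
      Real.exp (4 * δ * x / Real.sqrt m - 2 * δ * Real.sqrt m) :=
  binomial_ratio_bound_general m x hx δ hδ0 hδ1
end
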